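/- arXiv:2107.14421 — 8 statements merged into one kernel-verified Lean document; each statement's English description precedes it below -/
import Mathlib

section
/- For a connected graph G of diameter D with largest adjacency eigenvalue λ₁, the principal ratio γ(G) = q_max/q_min satisfies γ(G) ≤ λ₁^D. -/
open SimpleGraph Matrix

/-- For a connected graph `G` of diameter `D` with positive principal eigenvector `q`
to the largest eigenvalue `μ`, the principal ratio satisfies `γ(G) ≤ μ ^ D`. -/
theorem stmt_1 {n : ℕ} (G : SimpleGraph (Fin n)) [DecidableRel G.Adj]
    (hG : G.Connected) (μ : ℝ) (q : Fin n → ℝ) (hpos : ∀ v, 0 < q v)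
    (heig : G.adjMatrix ℝ *ᵥ q = μ • q)
    (i j : Fin n) :
    q i / q j ≤ μ ^ G.diam := by
  have hNe : Nonempty (Fin n) := ⟨i⟩
  -- the eigenvector equation at a vertex
  have hsum : ∀ v : Fin n, μ * q v = ∑ w ∈ G.neighborFinset v, q w := by
    intro v
    have := congrFun heig v
    rw [adjMatrix_mulVec_apply] at this
    simpa [Pi.smul_apply, smul_eq_mul] using this.symm
  -- neighbor step
  have hstep : ∀ {u k : Fin n}, G.Adj u k → q k ≤ μ * q u := by
    intro u k huk
    rw [hsum u]
    exact Finset.single_le_sum (fun w _ => (hpos w).le)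
      ((SimpleGraph.mem_neighborFinset G u k).mpr huk)
  have hμ0 : 0 ≤ μ := by
    have h := hsum i
    have hge : (0:ℝ) ≤ ∑ w ∈ G.neighborFinset i, q w :=
      Finset.sum_nonneg fun w _ => (hpos w).le
    nlinarith [hpos i]
  -- walk inequality
  have hwalk : ∀ {u v : Fin n} (p : G.Walk u v), q v ≤ μ ^ p.length * q u := by
    intro u v p
    induction p with
    | nil => simp
    | @cons a b c hab p ih =>
      calc q c ≤ μ ^ p.length * q b := ih
        _ ≤ μ ^ p.length * (μ * q a) :=
            mul_le_mul_of_nonneg_left (hstep hab) (pow_nonneg hμ0 _)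
        _ = μ ^ (SimpleGraph.Walk.cons hab p).length * q a := by
            rw [SimpleGraph.Walk.length_cons]; ring
  obtain ⟨p, hp⟩ := hG.exists_walk_length_eq_dist j i
  have hqi : q i ≤ μ ^ G.dist j i * q j := hp ▸ hwalk p
  have hediam : G.ediam ≠ ⊤ := by
    obtain ⟨u, v, huv⟩ := SimpleGraph.exists_edist_eq_ediam_of_finite (G := G)
    rw [← huv]
    exact SimpleGraph.edist_ne_top_iff_reachable.mpr (hG u v)
  have hdle : G.dist j i ≤ G.diam := SimpleGraph.dist_le_diam hediam
  rw [div_le_iff₀ (hpos j)]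
  refine hqi.trans (mul_le_mul_of_nonneg_right ?_ (hpos j).le)
  -- μ ^ dist ≤ μ ^ diam
  rcases Nat.eq_or_lt_of_le hdle with h | h
  · rw [h]
  · -- need μ ≥ 1; diam > 0 so there exist two distinct vertices, hence n ≥ 2
    have hnt : Nontrivial (Fin n) := by
      by_contra hns
      have : Subsingleton (Fin n) := not_nontrivial_iff_subsingleton.mp hns
      have : G.ediam = 0 := SimpleGraph.ediam_eq_zero_of_subsingleton
      have hd0 : G.diam = 0 := by simp [SimpleGraph.diam, this]
      omega
    -- vertex minimizing q
    obtain ⟨v, _, hv⟩ := Finset.exists_min_image Finset.univ q ⟨i, Finset.mem_univ i⟩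
    obtain ⟨w, hvw⟩ : ∃ w, G.Adj v w := by
      obtain ⟨w, hw⟩ := exists_ne v
      obtain ⟨p⟩ := hG v w
      cases p with
      | nil => exact absurd rfl hw
      | cons h p => exact ⟨_, h⟩
    have h1 : q v ≤ μ * q v := (hv w (Finset.mem_univ w)).trans (hstep hvw)
    have hμ1 : 1 ≤ μ := by nlinarith [hpos v]
    exact pow_le_pow_right₀ hμ1 hdle
end

section
/- For a connected d-regular graph G on n vertices, the diameter D satisfies D ≤ 3n/d. -/
open SimpleGraph Finset

private lemma dist_getVert_le {n : ℕ} {G : SimpleGraph (Fin n)} (hG : G.Connected) {u v : Fin n}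
    (p : G.Walk u v) (k : ℕ) : G.dist u (p.getVert k) ≤ k := by
  induction k with
  | zero => simp [p.getVert_zero]
  | succ k ih =>
    by_cases hk : k < p.length
    · have hadj := p.adj_getVert_succ hk
      calc G.dist u (p.getVert (k+1)) ≤ G.dist u (p.getVert k) + G.dist (p.getVert k) (p.getVert (k+1)) := hG.dist_triangle
        _ ≤ k + 1 := by
            have : G.dist (p.getVert k) (p.getVert (k+1)) ≤ 1 := by
              rw [SimpleGraph.dist_eq_one_iff_adj.mpr hadj]
            omega
    · rw [p.getVert_of_length_le (by omega)]
      have := p.getVert_of_length_le (Nat.le_of_not_lt hk)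
      calc G.dist u v ≤ k := this ▸ ih
        _ ≤ k + 1 := Nat.le_succ k

private lemma dist_getVert_le' {n : ℕ} {G : SimpleGraph (Fin n)} (hG : G.Connected) {u v : Fin n}
    (p : G.Walk u v) {k : ℕ} (hk : k ≤ p.length) :
    G.dist (p.getVert k) v ≤ p.length - k := by
  have h := dist_getVert_le hG p.reverse (p.length - k)
  rw [p.getVert_reverse] at h
  have h2 : p.length - (p.length - k) = k := by omega
  rw [h2] at h
  rw [SimpleGraph.dist_comm]
  simpa [p.length_reverse] using h

/-- For a connected `d`-regular graph `G` on `n` vertices, the diameter satisfies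
`D ≤ 3n/d`. -/
theorem stmt_2 {n d : ℕ} (G : SimpleGraph (Fin n)) [DecidableRel G.Adj]
    (hG : G.Connected) (hd : 0 < d) (hreg : G.IsRegularOfDegree d) :
    (G.diam : ℝ) ≤ 3 * n / d := by
  have hne : Nonempty (Fin n) := hG.nonempty
  set D := G.diam with hD
  -- key: d * D ≤ 3 * n
  have key : d * D ≤ 3 * n := by
    obtain ⟨u, v, huv⟩ := G.exists_dist_eq_diam (α := Fin n)
    have hreach : G.Reachable u v := hG u v
    obtain ⟨p, hp⟩ := hreach.exists_walk_length_eq_edist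
    have hedist : G.edist u v ≠ ⊤ := by
      rw [SimpleGraph.edist_ne_top_iff_reachable]; exact hreach
    have h1 : G.dist u v = p.length := by
      rw [SimpleGraph.dist, ← hp]
      simp
    have hplen : p.length = D := by
      rw [hD, ← huv, h1]
    -- distance lower bound along geodesic
    have hdistlb : ∀ a b : ℕ, a ≤ b → b ≤ D → 3 ≤ b - a →
        ¬ (Disjoint (G.neighborFinset (p.getVert a)) (G.neighborFinset (p.getVert b))) → False := by
      intro a b hab hbD h3 hdisj
      rw [Finset.not_disjoint_iff] at hdisj
      obtain ⟨w, hwa, hwb⟩ := hdisj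
      rw [SimpleGraph.mem_neighborFinset] at hwa hwb
      have hd2 : G.dist (p.getVert a) (p.getVert b) ≤ 2 := by
        calc G.dist (p.getVert a) (p.getVert b)
            ≤ G.dist (p.getVert a) w + G.dist w (p.getVert b) := hG.dist_triangle
          _ ≤ 1 + 1 := by
              gcongr
              · exact le_of_eq (SimpleGraph.dist_eq_one_iff_adj.mpr hwa)
              · exact le_of_eq (SimpleGraph.dist_eq_one_iff_adj.mpr hwb.symm)
      have h1 : G.dist u (p.getVert a) ≤ a := dist_getVert_le hG p a
      have h2 : G.dist (p.getVert b) v ≤ D - b := by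
        have := dist_getVert_le' hG p (k := b) (by omega)
        omega
      have htri : D ≤ G.dist u (p.getVert a) + G.dist (p.getVert a) (p.getVert b)
          + G.dist (p.getVert b) v := by
        calc D = G.dist u v := huv.symm
          _ ≤ G.dist u (p.getVert b) + G.dist (p.getVert b) v := hG.dist_triangle
          _ ≤ (G.dist u (p.getVert a) + G.dist (p.getVert a) (p.getVert b))
              + G.dist (p.getVert b) v := by
                gcongr
                exact hG.dist_triangle
      omega
    -- the disjoint union of neighborhoods
    have hcard : ∀ i : ℕ, (G.neighborFinset (p.getVert (3 * i))).card = d :=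
      fun i => hreg _
    have hdisj : ∀ i ∈ Finset.range (D / 3 + 1), ∀ j ∈ Finset.range (D / 3 + 1), i ≠ j →
        Disjoint (G.neighborFinset (p.getVert (3 * i))) (G.neighborFinset (p.getVert (3 * j))) := by
      intro i hi j hj hij
      rw [Finset.mem_range] at hi hj
      by_contra hnd
      rcases Nat.lt_or_ge i j with h | h
      · exact hdistlb (3 * i) (3 * j) (by omega) (by omega) (by omega) hnd
      · have h' : i > j := by omega
        exact hdistlb (3 * j) (3 * i) (by omega) (by omega) (by omega) (fun h => hnd h.symm)
    have hsub : ((Finset.range (D / 3 + 1)).biUnion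
        (fun i => G.neighborFinset (p.getVert (3 * i)))).card ≤ n := by
      calc _ ≤ (Finset.univ : Finset (Fin n)).card := Finset.card_le_card (Finset.subset_univ _)
        _ = n := by simp
    rw [Finset.card_biUnion hdisj] at hsub
    simp only [hcard, Finset.sum_const, Finset.card_range, smul_eq_mul] at hsub
    -- (D/3 + 1) * d ≤ n
    have : D ≤ 3 * (D / 3) + 2 := by omega
    nlinarith [Nat.div_le_self D 3]
  -- convert to ℝ
  rw [le_div_iff₀ (by positivity)]
  have : (d : ℝ) * D ≤ 3 * n := by exact_mod_cast (by linarith [key] : d * D ≤ 3 * n)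
  linarith
end

section
/- Let G be a connected graph containing a pendant path with vertices 1, 2, …, k (consecutive vertices adjacent, deg(1) = 1, and vertices 2,…,k−1 of degree 2 in G). If q is the principal eigenvector of G with largest eigenvalue λ₁, then for all 1 ≤ j ≤ k, q_j / q_1 = U_{j−1}(λ₁/2), where U_m is the m-th Chebyshev polynomial of the second kind. -/
open SimpleGraph Matrix Polynomial

/-- If `G` is connected and contains a pendant path `v 0, v 1, ..., v (k-1)` (an induced
path whose endpoint `v 0` has degree 1 in `G` and whose internal vertices have degree 2
in `G`), and `q` is the principal eigenvector with largest eigenvalue `μ`, then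
`q (v j) / q (v 0) = U_j (μ / 2)` (Chebyshev polynomial of the second kind). -/
theorem stmt_7 {n k : ℕ} (hk : 0 < k) (G : SimpleGraph (Fin n)) [DecidableRel G.Adj]
    (hG : G.Connected)
    (v : Fin k → Fin n) (hinj : Function.Injective v)
    (hpath : ∀ i j : Fin k, G.Adj (v i) (v j) ↔ ((i : ℕ) + 1 = j ∨ (j : ℕ) + 1 = i))
    (hdeg1 : G.degree (v ⟨0, hk⟩) = 1)
    (hdeg2 : ∀ i : Fin k, 0 < (i : ℕ) → (i : ℕ) < k - 1 → G.degree (v i) = 2)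
    (μ : ℝ) (q : Fin n → ℝ) (hpos : ∀ w, 0 < q w)
    (heig : G.adjMatrix ℝ *ᵥ q = μ • q) :
    ∀ j : Fin k, q (v j) / q (v ⟨0, hk⟩) = (Chebyshev.U ℝ (j : ℤ)).eval (μ / 2) := by
  have hq0 : q (v ⟨0, hk⟩) ≠ 0 := (hpos _).ne'
  have key : ∀ m : ℕ, ∀ h : m < k,
      q (v ⟨m, h⟩) = (Chebyshev.U ℝ (m : ℤ)).eval (μ / 2) * q (v ⟨0, hk⟩) := by
    intro m
    induction m using Nat.strong_induction_on with
    | _ m ih =>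
      intro h
      match m, h with
      | 0, h => simp [Polynomial.Chebyshev.U_zero]
      | 1, h =>
        have he := congrFun heig (v ⟨0, hk⟩)
        rw [adjMatrix_mulVec_apply] at he
        have hadj : G.Adj (v ⟨0, hk⟩) (v ⟨1, h⟩) := by rw [hpath]; left; simp
        have hsub : {v ⟨1, h⟩} ⊆ G.neighborFinset (v ⟨0, hk⟩) := by
          simp [SimpleGraph.mem_neighborFinset, hadj]
        have hset : G.neighborFinset (v ⟨0, hk⟩) = {v ⟨1, h⟩} := by
          refine (Finset.eq_of_subset_of_card_le hsub ?_).symm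
          rw [SimpleGraph.card_neighborFinset_eq_degree, hdeg1]
          simp
        rw [hset, Finset.sum_singleton] at he
        rw [he]
        have : Polynomial.Chebyshev.U ℝ ((1:ℕ):ℤ) = 2 * Polynomial.X := by
          norm_num [Polynomial.Chebyshev.U_one]
        rw [this]
        simp only [Pi.smul_apply, smul_eq_mul, Polynomial.eval_mul, Polynomial.eval_X,
          Polynomial.eval_ofNat]
        ring
      | (m+2), h =>
        have h1 : m + 1 < k := by omega
        have hm : m < k := by omega
        have he := congrFun heig (v ⟨m+1, h1⟩)
        rw [adjMatrix_mulVec_apply] at he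
        have hadj1 : G.Adj (v ⟨m+1, h1⟩) (v ⟨m, hm⟩) := by rw [hpath]; right; simp
        have hadj2 : G.Adj (v ⟨m+1, h1⟩) (v ⟨m+2, h⟩) := by rw [hpath]; left; simp
        have hne : v ⟨m, hm⟩ ≠ v ⟨m+2, h⟩ := by
          intro hc
          have := hinj hc
          simp [Fin.ext_iff] at this
        have hsub : ({v ⟨m, hm⟩, v ⟨m+2, h⟩} : Finset (Fin n)) ⊆
            G.neighborFinset (v ⟨m+1, h1⟩) := by
          intro x hx
          simp only [Finset.mem_insert, Finset.mem_singleton] at hx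
          rcases hx with rfl | rfl
          · exact (SimpleGraph.mem_neighborFinset _ _ _).mpr hadj1
          · exact (SimpleGraph.mem_neighborFinset _ _ _).mpr hadj2
        have hset : G.neighborFinset (v ⟨m+1, h1⟩) = {v ⟨m, hm⟩, v ⟨m+2, h⟩} := by
          refine (Finset.eq_of_subset_of_card_le hsub ?_).symm
          rw [SimpleGraph.card_neighborFinset_eq_degree, hdeg2 ⟨m+1, h1⟩ (by simp) (by simp; omega)]
          rw [Finset.card_insert_of_notMem (by simpa using hne), Finset.card_singleton]
        rw [hset, Finset.sum_insert (by simpa using hne), Finset.sum_singleton] at he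
        simp only [Pi.smul_apply, smul_eq_mul] at he
        have e1 := ih m (by omega) hm
        have e2 := ih (m+1) (by omega) h1
        have hU : Polynomial.Chebyshev.U ℝ (((m+2:ℕ)):ℤ) =
            2 * Polynomial.X * Polynomial.Chebyshev.U ℝ ((m:ℤ)+1) - Polynomial.Chebyshev.U ℝ (m:ℤ) := by
          push_cast
          exact Polynomial.Chebyshev.U_add_two ℝ m
        have : q (v ⟨m+2, h⟩) = μ * q (v ⟨m+1, h1⟩) - q (v ⟨m, hm⟩) := by linarith
        rw [this, e1, e2, hU]
        push_cast
        simp [Polynomial.eval_sub, Polynomial.eval_mul]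
        ring
  intro j
  have := key j.val j.isLt
  rw [Fin.eta] at this
  rw [this]
  field_simp
end

section
/- Let G be a connected d-regular graph and e = {1,2} an edge of G such that G−e is connected. Then the minimum coordinate of the principal eigenvector of G−e is attained at vertex 1 or vertex 2. -/
/-!
Pairing the eigenvalue equation of `H = G − e` with the all-ones vector gives
`∑ deg_H(v) q(v) = μ ∑ q(v)`; since `deg_H ≤ d` everywhere with strict inequality at the
endpoints of `e`, this forces `μ < d`. At a vertex `v` where `q` is minimal,
`deg_H(v) q(v) ≤ ∑_{w ~ v} q(w) = μ q(v)`, so `deg_H(v) ≤ μ < d`, and `v` must be an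
endpoint of `e`.
-/

open SimpleGraph Matrix

namespace SimpleGraph

variable {V : Type*} [Fintype V]

section Eigenvector

variable (H : SimpleGraph V) [DecidableRel H.Adj] {R : Type*}

theorem sum_degree_mul_eq_of_adjMatrix_mulVec_eq_smul [CommSemiring R] {μ : R} {q : V → R}
    (h : H.adjMatrix R *ᵥ q = μ • q) : ∑ v, (H.degree v : R) * q v = μ * ∑ v, q v := by
  -- `1 ᵥ* H.adjMatrix R` is the degree vector
  have h1 := congrArg (fun x => 1 ⬝ᵥ x) h
  simp only [dotProduct_mulVec, dotProduct_smul, smul_eq_mul] at h1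
  convert h1 using 2 <;> simp [dotProduct]

variable {H} [CommRing R] [LinearOrder R] [IsStrictOrderedRing R] {μ : R} {q : V → R}

theorem degree_le_of_adjMatrix_mulVec_eq_smul_of_forall_le (h : H.adjMatrix R *ᵥ q = μ • q)
    {v : V} (hv : 0 < q v) (hmin : ∀ w, q v ≤ q w) : (H.degree v : R) ≤ μ := by
  refine le_of_mul_le_mul_right ?_ hv
  calc (H.degree v : R) * q v = ∑ _w ∈ H.neighborFinset v, q v := by
        rw [Finset.sum_const, card_neighborFinset_eq_degree, nsmul_eq_mul]
    _ ≤ ∑ w ∈ H.neighborFinset v, q w := Finset.sum_le_sum fun w _ => hmin w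
    _ = μ * q v := by rw [← adjMatrix_mulVec_apply, h, Pi.smul_apply, smul_eq_mul]

theorem lt_of_adjMatrix_mulVec_eq_smul_of_degree_lt {d : ℕ} (h : H.adjMatrix R *ᵥ q = μ • q)
    (hq : ∀ v, 0 < q v) (hle : ∀ v, H.degree v ≤ d) {u : V} (hlt : H.degree u < d) :
    μ < d := by
  have hsum : 0 < ∑ v, q v := Finset.sum_pos (fun v _ => hq v) ⟨u, Finset.mem_univ u⟩
  refine lt_of_mul_lt_mul_right ?_ hsum.le
  calc μ * ∑ v, q v = ∑ v, (H.degree v : R) * q v :=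
        (sum_degree_mul_eq_of_adjMatrix_mulVec_eq_smul H h).symm
    _ < ∑ v, (d : R) * q v := by
        refine Finset.sum_lt_sum (fun v _ => ?_) ⟨u, Finset.mem_univ u, ?_⟩
        · exact mul_le_mul_of_nonneg_right (mod_cast hle v) (hq v).le
        · exact mul_lt_mul_of_pos_right (mod_cast hlt) (hq u)
    _ = d * ∑ v, q v := Finset.mul_sum _ _ _ |>.symm

end Eigenvector

section DeleteEdge

variable (G : SimpleGraph V) [DecidableRel G.Adj] {a b : V}
  [DecidableRel (G.deleteEdges {s(a, b)}).Adj]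

theorem degree_deleteEdges_lt_of_adj (hab : G.Adj a b) :
    (G.deleteEdges {s(a, b)}).degree a < G.degree a := by
  simp only [← card_neighborFinset_eq_degree]
  refine Finset.card_lt_card (Finset.ssubset_iff_of_subset ?_ |>.mpr ⟨b, ?_, ?_⟩)
  · intro w; simp +contextual
  · simpa using hab
  · simp

theorem degree_deleteEdges_of_ne {v : V} (hva : v ≠ a) (hvb : v ≠ b) :
    (G.deleteEdges {s(a, b)}).degree v = G.degree v := by
  simp only [← card_neighborFinset_eq_degree]
  congr 1
  ext w
  simp [hva, hvb]

end DeleteEdge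

end SimpleGraph

theorem stmt_12_general {n d : ℕ} (G : SimpleGraph (Fin n)) [DecidableRel G.Adj]
    (hreg : G.IsRegularOfDegree d) (a b : Fin n) (hab : G.Adj a b)
    [DecidableRel (G.deleteEdges {s(a, b)}).Adj]
    (μ : ℝ) (q : Fin n → ℝ) (hpos : ∀ w, 0 < q w)
    (heig : (G.deleteEdges {s(a, b)}).adjMatrix ℝ *ᵥ q = μ • q) :
    (∀ i, q a ≤ q i) ∨ (∀ i, q b ≤ q i) := by
  have hμ : μ < d := lt_of_adjMatrix_mulVec_eq_smul_of_degree_lt heig hpos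
    (fun v => hreg v ▸ degree_le_of_le (deleteEdges_le _))
    (hreg a ▸ G.degree_deleteEdges_lt_of_adj hab)
  have : Nonempty (Fin n) := ⟨a⟩
  obtain ⟨v, hmin⟩ := Finite.exists_min q
  have hv := degree_le_of_adjMatrix_mulVec_eq_smul_of_forall_le heig (hpos v) hmin
  by_cases hva : v = a
  · exact .inl (hva ▸ hmin)
  by_cases hvb : v = b
  · exact .inr (hvb ▸ hmin)
  rw [G.degree_deleteEdges_of_ne hva hvb, hreg v] at hv
  exact absurd hμ hv.not_gt

/-- Let `G` be a connected `d`-regular graph and `e = {a,b}` an edge such that `G − e`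
is connected. Then the minimum coordinate of the principal eigenvector of `G − e` is
attained at `a` or at `b`. -/
theorem stmt_12 {n d : ℕ} (G : SimpleGraph (Fin n)) [DecidableRel G.Adj] (hG : G.Connected)
    (hreg : G.IsRegularOfDegree d) (a b : Fin n) (hab : G.Adj a b)
    [DecidableRel (G.deleteEdges {s(a, b)}).Adj]
    (hconn : (G.deleteEdges {s(a, b)}).Connected)
    (μ : ℝ) (q : Fin n → ℝ) (hpos : ∀ w, 0 < q w)
    (heig : (G.deleteEdges {s(a, b)}).adjMatrix ℝ *ᵥ q = μ • q) :
    (∀ i, q a ≤ q i) ∨ (∀ i, q b ≤ q i) :=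
  stmt_12_general G hreg a b hab μ q hpos heig
end

section
/- Let G be a connected d-regular graph on n vertices, e = {1,2} ∈ E(G) with G−e connected, and suppose dist_{G−e}(1,2) < c for a constant c. Then the principal ratio satisfies γ(G−e) < n²(1 + d^c). -/
/-!
Write `H = G - e` and let `q > 0` be an eigenvector of `H` with eigenvalue `μ`. Summing the
eigenvalue equation over all vertices gives `(d - μ) ∑ q = q a + q b`, so `μ < d`. At a vertex
minimising `q` the equation forces `deg_H ≤ μ < d`, so the minimum sits at `a` or `b`; along a
shortest `a`–`b` walk `q` grows by a factor at most `μ ≤ d` per step, so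
`q a + q b ≤ (1 + d^c) min q`. At a vertex `u` maximising `q`, Cauchy–Schwarz along a path from
`u` to `a` and the Laplacian identity `∑_{v ∼ w} (q v - q w)² = 2 ∑ (deg_H v - μ) q v²
≤ 2 (d - μ) q u ∑ q` give `(q u - q a)² ≤ 2 (n - 1) (q a + q b) q u`, whence
`q u < n² (q a + q b)`.
-/

open SimpleGraph Matrix Finset

namespace SimpleGraph

variable {V : Type*} {H : SimpleGraph V}

theorem Walk.sub_eq_sum_darts (f : V → ℝ) {u v : V} (p : H.Walk u v) :
    f u - f v = (p.darts.map fun e => f e.fst - f e.snd).sum := by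
  induction p with
  | nil => simp
  | cons h p ih => simp only [Walk.darts_cons, List.map_cons, List.sum_cons, ← ih]; ring

variable [Fintype V] [DecidableRel H.Adj]

theorem sum_darts_le_sum_adj {l : List H.Dart} (hl : l.Nodup) (g : V → V → ℝ)
    (hg : ∀ v w, 0 ≤ g v w) :
    (l.map fun e => g e.fst e.snd).sum ≤ ∑ v, ∑ w, if H.Adj v w then g v w else 0 := by
  classical
  rw [← List.sum_toFinset _ hl, ← Fintype.sum_prod_type', ← Finset.sum_filter]
  refine (Finset.sum_map l.toFinset ⟨_, Dart.toProd_injective⟩ fun x => g x.1 x.2).symm.trans_le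
    (Finset.sum_le_sum_of_subset_of_nonneg ?_ fun x _ _ => hg _ _)
  intro x hx
  obtain ⟨e, -, rfl⟩ := Finset.mem_map.mp hx
  simp [e.adj]

theorem Walk.IsPath.sq_sub_le {u v : V} {p : H.Walk u v} (hp : p.IsPath) (f : V → ℝ) :
    (f u - f v) ^ 2 ≤ p.length * ∑ x, ∑ y, if H.Adj x y then (f x - f y) ^ 2 else 0 := by
  classical
  have hnodup := darts_nodup_of_support_nodup hp.support_nodup
  calc (f u - f v) ^ 2 = (∑ e ∈ p.darts.toFinset, (f e.fst - f e.snd)) ^ 2 := by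
        rw [List.sum_toFinset _ hnodup, p.sub_eq_sum_darts]
    _ ≤ p.length * ∑ e ∈ p.darts.toFinset, (f e.fst - f e.snd) ^ 2 := by
        simpa [List.toFinset_card_of_nodup hnodup] using
          sq_sum_le_card_mul_sum_sq (s := p.darts.toFinset) (f := fun e => f e.fst - f e.snd)
    _ ≤ p.length * ∑ x, ∑ y, if H.Adj x y then (f x - f y) ^ 2 else 0 := by
        rw [List.sum_toFinset _ hnodup]
        gcongr
        exact sum_darts_le_sum_adj hnodup (fun x y => (f x - f y) ^ 2) fun _ _ => sq_nonneg _

theorem Connected.sq_sub_le (hH : H.Connected) (f : V → ℝ) (u v : V) :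
    (f u - f v) ^ 2 ≤
      (Fintype.card V - 1) * ∑ x, ∑ y, if H.Adj x y then (f x - f y) ^ 2 else 0 := by
  classical
  obtain ⟨p, hp⟩ := (hH.preconnected u v).some.toPath
  have hlen : (p.length : ℝ) ≤ Fintype.card V - 1 := by
    have := hp.length_lt
    rw [le_sub_iff_add_le]; exact_mod_cast this
  refine (hp.sq_sub_le f).trans (mul_le_mul_of_nonneg_right hlen ?_)
  exact Finset.sum_nonneg fun x _ => Finset.sum_nonneg fun y _ => by split_ifs <;> positivity

section Eigenvector

variable {μ : ℝ} {q : V → ℝ} (heig : H.adjMatrix ℝ *ᵥ q = μ • q)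
include heig

theorem mul_apply_eq_sum_neighborFinset (v : V) :
    μ * q v = ∑ w ∈ H.neighborFinset v, q w := by
  simpa using (congrFun heig v).symm

theorem apply_le_mul_of_adj (hq : ∀ w, 0 ≤ q w) {v w : V} (hvw : H.Adj v w) :
    q w ≤ μ * q v := by
  rw [mul_apply_eq_sum_neighborFinset heig]
  exact Finset.single_le_sum (fun x _ => hq x) ((H.mem_neighborFinset v w).mpr hvw)

theorem apply_le_pow_length_mul (hq : ∀ w, 0 ≤ q w) (hμ : 0 ≤ μ) {v w : V} (p : H.Walk v w) :
    q w ≤ μ ^ p.length * q v := by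
  induction p with
  | nil => simp
  | cons h p ih =>
    calc _ ≤ μ ^ p.length * _ := ih
      _ ≤ μ ^ p.length * (μ * _) := by gcongr; exact apply_le_mul_of_adj heig hq h
      _ = _ := by rw [Walk.length_cons]; ring

theorem apply_le_pow_dist_mul (hH : H.Connected) (hq : ∀ w, 0 ≤ q w) (hμ : 0 ≤ μ) (v w : V) :
    q w ≤ μ ^ H.dist v w * q v := by
  obtain ⟨p, hp⟩ := hH.exists_walk_length_eq_dist v w
  exact hp ▸ apply_le_pow_length_mul heig hq hμ p

theorem eigenvalue_nonneg (hpos : ∀ w, 0 < q w) (v : V) : 0 ≤ μ := by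
  refine nonneg_of_mul_nonneg_left ?_ (hpos v)
  rw [mul_apply_eq_sum_neighborFinset heig]
  exact Finset.sum_nonneg fun w _ => (hpos w).le

theorem degree_le_eigenvalue_of_forall_le {v : V} (hv : 0 < q v) (hmin : ∀ w, q v ≤ q w) :
    (H.degree v : ℝ) ≤ μ := by
  refine le_of_mul_le_mul_right ?_ hv
  calc (H.degree v : ℝ) * q v = ∑ w ∈ H.neighborFinset v, q v := by simp
    _ ≤ ∑ w ∈ H.neighborFinset v, q w := Finset.sum_le_sum fun w _ => hmin w
    _ = μ * q v := (mul_apply_eq_sum_neighborFinset heig v).symm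

theorem mul_sum_eq_sum_degree_mul : μ * ∑ v, q v = ∑ v, H.degree v * q v := by
  calc μ * ∑ v, q v = 1 ⬝ᵥ (μ • q) := by simp [dotProduct, Finset.mul_sum]
    _ = 1 ⬝ᵥ (H.adjMatrix ℝ *ᵥ q) := by rw [heig]
    _ = (1 ᵥ* H.adjMatrix ℝ) ⬝ᵥ q := dotProduct_mulVec _ _ _
    _ = ∑ v, H.degree v * q v := by simp [dotProduct]

theorem sum_adj_sq_sub_eq :
    ∑ v, ∑ w, (if H.Adj v w then (q v - q w) ^ 2 else 0) =
      2 * ∑ v, (H.degree v - μ) * q v ^ 2 := by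
  classical
  have hlap := H.lapMatrix_toLinearMap₂' ℝ q
  rw [toLinearMap₂'_apply', lapMatrix, sub_mulVec, heig, dotProduct_sub,
    dotProduct_mulVec_degMatrix] at hlap
  have : ∑ v, (H.degree v - μ) * q v ^ 2 = ∑ v, H.degree v * q v * q v - q ⬝ᵥ μ • q := by
    simp only [dotProduct, Pi.smul_apply, smul_eq_mul, ← Finset.sum_sub_distrib]
    exact Finset.sum_congr rfl fun v _ => by ring
  linarith

end Eigenvector

section DeleteEdge

variable [DecidableEq V] {G : SimpleGraph V} [DecidableRel G.Adj] {a b : V}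
    [DecidableRel (G.deleteEdges {s(a, b)}).Adj]

theorem neighborFinset_deleteEdges_edge (v : V) :
    (G.deleteEdges {s(a, b)}).neighborFinset v =
      (G.neighborFinset v).filter fun w => s(v, w) ≠ s(a, b) := by
  ext w
  simp [deleteEdges_adj]

theorem degree_deleteEdges_add_ite (hab : G.Adj a b) (v : V) :
    (G.deleteEdges {s(a, b)}).degree v + (if v = a then 1 else 0) + (if v = b then 1 else 0) =
      G.degree v := by
  have hab' : a ≠ b := hab.ne
  simp only [← card_neighborFinset_eq_degree, neighborFinset_deleteEdges_edge]
  by_cases hva : v = a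
  · subst hva
    have hb : b ∈ G.neighborFinset v := (G.mem_neighborFinset _ _).mpr hab
    have : {w ∈ G.neighborFinset v | s(v, w) ≠ s(v, b)} = (G.neighborFinset v).erase b := by
      ext w
      simp [hab', and_comm]
    rw [this, if_pos rfl, if_neg hab']
    exact card_erase_add_one hb
  by_cases hvb : v = b
  · subst hvb
    have ha : a ∈ G.neighborFinset v := (G.mem_neighborFinset _ _).mpr hab.symm
    have : {w ∈ G.neighborFinset v | s(v, w) ≠ s(a, v)} = (G.neighborFinset v).erase a := by
      ext w
      simp [hva, and_comm]
    rw [this, if_neg hva, if_pos rfl]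
    exact card_erase_add_one ha
  rw [Finset.filter_true_of_mem]
  · simp [hva, hvb]
  · intro w _ h
    grind [Sym2.eq_iff]

variable {d : ℕ} {μ : ℝ} {q : V → ℝ} (hreg : G.IsRegularOfDegree d) (hab : G.Adj a b)
  (heig : (G.deleteEdges {s(a, b)}).adjMatrix ℝ *ᵥ q = μ • q) (hpos : ∀ w, 0 < q w)
include hreg hab heig

theorem IsRegularOfDegree.sub_mul_sum_eq_deleteEdges :
    ((d : ℝ) - μ) * ∑ v, q v = q a + q b := by
  have hsplit (v : V) : (d : ℝ) * q v = (G.deleteEdges {s(a, b)}).degree v * q v +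
      (if v = a then q v else 0) + (if v = b then q v else 0) := by
    rw [← hreg v, ← degree_deleteEdges_add_ite hab v]
    push_cast
    split_ifs <;> ring
  rw [sub_mul, mul_sum_eq_sum_degree_mul heig, Finset.mul_sum]
  simp only [hsplit, Finset.sum_add_distrib, Finset.sum_ite_eq', Finset.mem_univ, if_true]
  ring

include hpos

theorem IsRegularOfDegree.eigenvalue_deleteEdges_lt : μ < d := by
  have hsum := hreg.sub_mul_sum_eq_deleteEdges hab heig
  have : 0 < ((d : ℝ) - μ) * ∑ v, q v := hsum ▸ add_pos (hpos a) (hpos b)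
  exact sub_pos.mp (pos_of_mul_pos_left this (Finset.sum_nonneg fun v _ => (hpos v).le))

theorem IsRegularOfDegree.min_le_eigenvector_deleteEdges (v : V) :
    min (q a) (q b) ≤ q v := by
  obtain ⟨v₀, -, hv₀⟩ := Finset.exists_min_image Finset.univ q ⟨a, Finset.mem_univ a⟩
  have hv₀ab : v₀ = a ∨ v₀ = b := by
    by_contra! h
    have hdeg := degree_deleteEdges_add_ite hab v₀
    rw [if_neg h.1, if_neg h.2, hreg v₀, add_zero, add_zero] at hdeg
    have := degree_le_eigenvalue_of_forall_le heig (hpos v₀) fun w => hv₀ w (Finset.mem_univ w)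
    rw [hdeg] at this
    exact (hreg.eigenvalue_deleteEdges_lt hab heig hpos).not_ge this
  refine le_trans ?_ (hv₀ v (Finset.mem_univ v))
  rcases hv₀ab with rfl | rfl
  · exact min_le_left _ _
  · exact min_le_right _ _

theorem IsRegularOfDegree.add_le_one_add_pow_mul_min_deleteEdges {c : ℕ}
    (hconn : (G.deleteEdges {s(a, b)}).Connected)
    (hdist : (G.deleteEdges {s(a, b)}).dist a b < c) :
    q a + q b ≤ (1 + (d : ℝ) ^ c) * min (q a) (q b) := by
  have hμ := eigenvalue_nonneg heig hpos a
  have hμd := hreg.eigenvalue_deleteEdges_lt hab heig hpos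
  have hd : (1 : ℝ) ≤ d := Nat.one_le_cast.mpr (by exact_mod_cast hμ.trans_lt hμd)
  have hpow : μ ^ (G.deleteEdges {s(a, b)}).dist a b ≤ (d : ℝ) ^ c :=
    (pow_le_pow_left₀ hμ hμd.le _).trans (pow_le_pow_right₀ hd hdist.le)
  have hba : q b ≤ (d : ℝ) ^ c * q a :=
    (apply_le_pow_dist_mul heig hconn (fun w => (hpos w).le) hμ a b).trans
      (by gcongr; exact (hpos a).le)
  have hab' : q a ≤ (d : ℝ) ^ c * q b := by
    refine (apply_le_pow_dist_mul heig hconn (fun w => (hpos w).le) hμ b a).trans ?_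
    rw [dist_comm]
    gcongr
    exact (hpos b).le
  rcases le_total (q a) (q b) with h | h
  · rw [min_eq_left h]; linarith
  · rw [min_eq_right h]; linarith

theorem IsRegularOfDegree.sq_sub_le_deleteEdges (hconn : (G.deleteEdges {s(a, b)}).Connected)
    {u : V} (hu : ∀ v, q v ≤ q u) :
    (q u - q a) ^ 2 ≤ 2 * (Fintype.card V - 1) * (q a + q b) * q u := by
  have hμd := hreg.eigenvalue_deleteEdges_lt hab heig hpos
  have hterm (v : V) : ((G.deleteEdges {s(a, b)}).degree v - μ) * q v ^ 2 ≤
      ((d : ℝ) - μ) * q u * q v := by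
    have hdeg : ((G.deleteEdges {s(a, b)}).degree v : ℝ) ≤ d := by
      rw [← hreg v, ← degree_deleteEdges_add_ite hab v, add_assoc]
      exact_mod_cast Nat.le_add_right _ _
    calc ((G.deleteEdges {s(a, b)}).degree v - μ) * q v ^ 2 ≤ ((d : ℝ) - μ) * q v ^ 2 := by
          gcongr
      _ ≤ ((d : ℝ) - μ) * q u * q v := by
          rw [sq, ← mul_assoc]
          exact mul_le_mul_of_nonneg_right
            (mul_le_mul_of_nonneg_left (hu v) (sub_nonneg.mpr hμd.le)) (hpos v).le
  have hcard : (0 : ℝ) ≤ Fintype.card V - 1 := by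
    rw [sub_nonneg, Nat.one_le_cast]; exact Fintype.card_pos_iff.mpr ⟨a⟩
  calc (q u - q a) ^ 2 ≤ (Fintype.card V - 1) *
        (2 * ∑ v, ((G.deleteEdges {s(a, b)}).degree v - μ) * q v ^ 2) := by
        rw [← sum_adj_sq_sub_eq heig]; exact hconn.sq_sub_le q u a
    _ ≤ (Fintype.card V - 1) * (2 * (((d : ℝ) - μ) * q u * ∑ v, q v)) := by
        refine mul_le_mul_of_nonneg_left (mul_le_mul_of_nonneg_left ?_ two_pos.le) hcard
        rw [Finset.mul_sum]
        exact Finset.sum_le_sum fun v _ => hterm v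
    _ = 2 * (Fintype.card V - 1) * (q a + q b) * q u := by
        rw [← hreg.sub_mul_sum_eq_deleteEdges hab heig]; ring

end DeleteEdge

end SimpleGraph

theorem lt_sq_mul_add_of_sq_sub_le {n x y M : ℝ} (hn : 2 ≤ n) (hx : 0 < x) (hy : 0 < y)
    (hM : 0 < M) (h : (M - x) ^ 2 ≤ 2 * (n - 1) * (x + y) * M) : M < n ^ 2 * (x + y) := by
  by_cases hMx : M < n ^ 2 * x
  · nlinarith
  push Not at hMx
  -- Now `M - x ≥ 3M/4`, so `9M ≤ 32(n - 1)(x + y)`, and `32(n - 1) < 9n²`.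
  have h4x : 4 * x ≤ M := by
    nlinarith [mul_le_mul_of_nonneg_right (by nlinarith : (4 : ℝ) ≤ n ^ 2) hx.le]
  have h9 : 9 * M ≤ 32 * (n - 1) * (x + y) := by nlinarith
  nlinarith [sq_nonneg (3 * n - 16 / 3)]

theorem stmt_14_general {n d c : ℕ} (G : SimpleGraph (Fin n)) [DecidableRel G.Adj]
    (hreg : G.IsRegularOfDegree d) (a b : Fin n) (hab : G.Adj a b)
    [DecidableRel (G.deleteEdges {s(a, b)}).Adj]
    (hconn : (G.deleteEdges {s(a, b)}).Connected)
    (hdist : (G.deleteEdges {s(a, b)}).dist a b < c)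
    (μ : ℝ) (q : Fin n → ℝ) (hpos : ∀ w, 0 < q w)
    (heig : (G.deleteEdges {s(a, b)}).adjMatrix ℝ *ᵥ q = μ • q) :
    ∀ i j : Fin n, q i / q j < (n : ℝ) ^ 2 * (1 + (d : ℝ) ^ c) := by
  intro i j
  obtain ⟨u, -, hu⟩ := Finset.exists_max_image Finset.univ q ⟨a, Finset.mem_univ a⟩
  have hu' : ∀ v, q v ≤ q u := fun v => hu v (Finset.mem_univ v)
  have hn : (2 : ℝ) ≤ n := by
    have := Fintype.one_lt_card_iff.mpr ⟨a, b, hab.ne⟩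
    rw [Fintype.card_fin] at this
    exact_mod_cast this
  have hmax : q u < (n : ℝ) ^ 2 * (q a + q b) := by
    refine lt_sq_mul_add_of_sq_sub_le hn (hpos a) (hpos b) (hpos u) ?_
    simpa using hreg.sq_sub_le_deleteEdges hab heig hpos hconn hu'
  rw [div_lt_iff₀ (hpos j)]
  calc q i ≤ q u := hu' i
    _ < (n : ℝ) ^ 2 * (q a + q b) := hmax
    _ ≤ (n : ℝ) ^ 2 * ((1 + (d : ℝ) ^ c) * min (q a) (q b)) := by
        gcongr; exact hreg.add_le_one_add_pow_mul_min_deleteEdges hab heig hpos hconn hdist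
    _ ≤ (n : ℝ) ^ 2 * (1 + (d : ℝ) ^ c) * q j := by
        rw [← mul_assoc]; gcongr; exact hreg.min_le_eigenvector_deleteEdges hab heig hpos j

/-- Let `G` be a connected `d`-regular graph on `n` vertices, `e = {a,b}` an edge with
`G − e` connected, and suppose `dist_{G−e}(a,b) < c`. Then the principal ratio of
`G − e` satisfies `γ(G−e) < n² (1 + d^c)`. -/
theorem stmt_14 {n d c : ℕ} (G : SimpleGraph (Fin n)) [DecidableRel G.Adj] (hG : G.Connected)
    (hreg : G.IsRegularOfDegree d) (a b : Fin n) (hab : G.Adj a b)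
    [DecidableRel (G.deleteEdges {s(a, b)}).Adj]
    (hconn : (G.deleteEdges {s(a, b)}).Connected)
    (hdist : (G.deleteEdges {s(a, b)}).dist a b < c)
    (μ : ℝ) (q : Fin n → ℝ) (hpos : ∀ w, 0 < q w)
    (heig : (G.deleteEdges {s(a, b)}).adjMatrix ℝ *ᵥ q = μ • q) :
    ∀ i j : Fin n, q i / q j < (n : ℝ) ^ 2 * (1 + (d : ℝ) ^ c) :=
  stmt_14_general G hreg a b hab hconn hdist μ q hpos heig
end

section
/- Let p ∈ ℝ^{n−1} and let U = (x Y) be an n×n orthogonal matrix with first column x. Define x̃ = (x + Yp)/sqrt(1 + ‖p‖²) and Ỹ = (Y − x pᵀ)(I_{n−1} + p pᵀ)^{−1/2}. Then the matrix Ũ = (x̃ Ỹ) is orthogonal. -/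
open Matrix

section aux

set_option linter.unusedSectionVars false

variable {k l : Type*} [Fintype k] [Fintype l]

lemma aux_mul_vecMulVec {j : Type*} (M : Matrix k l ℝ) (v : l → ℝ) (w : j → ℝ) :
    M * vecMulVec v w = vecMulVec (M *ᵥ v) w := by
  ext i j
  simp only [Matrix.mul_apply, vecMulVec_apply, Matrix.mulVec, dotProduct, Finset.sum_mul]
  exact Finset.sum_congr rfl fun a _ => by ring

lemma aux_vecMulVec_mul {j : Type*} (M : Matrix l j ℝ) (v : k → ℝ) (w : l → ℝ) :
    vecMulVec v w * M = vecMulVec v (Mᵀ *ᵥ w) := by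
  ext i j
  simp only [Matrix.mul_apply, vecMulVec_apply, Matrix.mulVec, dotProduct,
    Matrix.transpose_apply, Finset.mul_sum]
  exact Finset.sum_congr rfl fun a _ => by ring

lemma aux_vecMulVec_mulVec (v : k → ℝ) (w : l → ℝ) (u : l → ℝ) :
    vecMulVec v w *ᵥ u = (w ⬝ᵥ u) • v := by
  ext i
  simp only [Matrix.mulVec, vecMulVec_apply, dotProduct, Pi.smul_apply, smul_eq_mul,
    Finset.sum_mul]
  exact Finset.sum_congr rfl fun a _ => by ring

lemma aux_vecMulVec_transpose (v : k → ℝ) (w : l → ℝ) :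
    (vecMulVec v w)ᵀ = vecMulVec w v := by
  ext i j
  simp [vecMulVec_apply, mul_comm]

end aux

/-- Let `p ∈ ℝ^m` and let `(x Y)` be an `n × n` orthogonal matrix (with `m = n - 1`),
i.e. `xᵀx = 1`, `YᵀY = I`, `xᵀY = 0`. Let `S` be the inverse square root of
`I + ppᵀ` (a symmetric matrix with `S·S = (I + ppᵀ)⁻¹`). Define
`x̃ = (x + Yp)/√(1 + ‖p‖²)` and `Ỹ = (Y − xpᵀ)·S`. Then `(x̃ Ỹ)` is orthogonal:
`x̃ᵀx̃ = 1`, `ỸᵀỸ = I` and `Ỹᵀx̃ = 0`. -/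
theorem stmt_17 {n m : ℕ} (hm : m + 1 = n)
    (x : Fin n → ℝ) (Y : Matrix (Fin n) (Fin m) ℝ) (p : Fin m → ℝ)
    (hx : x ⬝ᵥ x = 1) (hY : Yᵀ * Y = 1) (hxY : Yᵀ *ᵥ x = 0)
    (S : Matrix (Fin m) (Fin m) ℝ) (hS : S.IsSymm)
    (hSsq : S * S = (1 + vecMulVec p p)⁻¹) :
    ((1 / Real.sqrt (1 + p ⬝ᵥ p)) • (x + Y *ᵥ p)) ⬝ᵥ
        ((1 / Real.sqrt (1 + p ⬝ᵥ p)) • (x + Y *ᵥ p)) = 1 ∧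
    ((Y - vecMulVec x p) * S)ᵀ * ((Y - vecMulVec x p) * S) = 1 ∧
    ((Y - vecMulVec x p) * S)ᵀ *ᵥ
        ((1 / Real.sqrt (1 + p ⬝ᵥ p)) • (x + Y *ᵥ p)) = 0 := by
  have hpp : (0:ℝ) ≤ p ⬝ᵥ p := by
    simp only [dotProduct]
    exact Finset.sum_nonneg fun i _ => mul_self_nonneg _
  have hc : (0:ℝ) < 1 + p ⬝ᵥ p := by linarith
  have hxYp : x ⬝ᵥ (Y *ᵥ p) = 0 := by
    rw [Matrix.dotProduct_mulVec, ← Matrix.mulVec_transpose]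
    simp [hxY]
  have hYpYp : (Y *ᵥ p) ⬝ᵥ (Y *ᵥ p) = p ⬝ᵥ p := by
    rw [Matrix.dotProduct_mulVec, ← Matrix.mulVec_transpose, Matrix.mulVec_mulVec, hY]
    simp
  have key1 : (x + Y *ᵥ p) ⬝ᵥ (x + Y *ᵥ p) = 1 + p ⬝ᵥ p := by
    rw [add_dotProduct, dotProduct_add, dotProduct_add,
      hx, hxYp, dotProduct_comm (Y *ᵥ p) x, hxYp, hYpYp]
    ring
  have hGram : (Y - vecMulVec x p)ᵀ * (Y - vecMulVec x p) = 1 + vecMulVec p p := by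
    rw [Matrix.transpose_sub, aux_vecMulVec_transpose, Matrix.sub_mul, Matrix.mul_sub,
      Matrix.mul_sub, hY, aux_mul_vecMulVec, hxY, aux_vecMulVec_mul,
      aux_vecMulVec_mul, hxY, aux_vecMulVec_transpose,
      aux_vecMulVec_mulVec, hx, one_smul]
    ext i j
    simp [vecMulVec_apply, Matrix.one_apply]
  set A : Matrix (Fin m) (Fin m) ℝ := 1 + vecMulVec p p with hAdef
  have hvv : vecMulVec p p * vecMulVec p p = (p ⬝ᵥ p) • vecMulVec p p := by
    rw [aux_vecMulVec_mul, aux_vecMulVec_transpose, aux_vecMulVec_mulVec]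
    ext i j
    simp only [vecMulVec_apply, Pi.smul_apply, Matrix.smul_apply, smul_eq_mul]
    ring
  set B : Matrix (Fin m) (Fin m) ℝ := 1 - ((1 + p ⬝ᵥ p)⁻¹) • vecMulVec p p with hBdef
  have hAB : A * B = 1 := by
    rw [hAdef, hBdef]
    ext i j
    simp only [Matrix.add_mul, Matrix.mul_sub, Matrix.mul_one, Matrix.one_mul,
      Matrix.mul_smul, hvv, smul_smul, Matrix.add_apply, Matrix.sub_apply,
      Matrix.smul_apply, Matrix.one_apply, vecMulVec_apply, smul_eq_mul]
    have h1 : ((1 + p ⬝ᵥ p)⁻¹ * (p ⬝ᵥ p)) * (p i * p j)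
        + (1 + p ⬝ᵥ p)⁻¹ * (p i * p j) = p i * p j := by
      field_simp
      ring
    split_ifs with h <;> nlinarith [h1]
  have hAinv : A⁻¹ = B := Matrix.inv_eq_right_inv hAB
  have hSS : S * S = B := hSsq.trans hAinv
  have hBA : B * A = 1 := mul_eq_one_comm.mp hAB
  have hSAS : S * A * S = 1 := by
    have h1 : S * (S * A) = 1 := by rw [← Matrix.mul_assoc, hSS, hBA]
    exact mul_eq_one_comm.mp h1
  refine ⟨?_, ?_, ?_⟩
  · rw [smul_dotProduct, dotProduct_smul, key1, smul_eq_mul, smul_eq_mul,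
      one_div, ← mul_assoc, ← mul_inv, Real.mul_self_sqrt hc.le]
    exact inv_mul_cancel₀ hc.ne'
  · rw [Matrix.transpose_mul, hS.eq, Matrix.mul_assoc S,
      ← Matrix.mul_assoc ((Y - vecMulVec x p)ᵀ), hGram, ← Matrix.mul_assoc]
    exact hSAS
  · rw [Matrix.transpose_mul, hS.eq, Matrix.mulVec_smul]
    have hinner : (Y - vecMulVec x p)ᵀ *ᵥ (x + Y *ᵥ p) = 0 := by
      rw [Matrix.transpose_sub, aux_vecMulVec_transpose, Matrix.sub_mulVec,
        Matrix.mulVec_add, Matrix.mulVec_add, hxY, Matrix.mulVec_mulVec, hY,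
        aux_vecMulVec_mulVec, aux_vecMulVec_mulVec, hx, hxYp]
      simp
    rw [← Matrix.mulVec_mulVec, hinner]
    simp
end

section
/- Let θ > 0, η ≥ 0 with 2η < θ, and M an invertible linear map on ℝ^{n−1} with ‖M^{−1}‖ = 1/θ, and e ∈ ℝ^{n−1} with ‖e‖ = η. Then there exists p ∈ ℝ^{n−1} with ‖p‖ ≤ 2η/(θ + sqrt(θ² − 4η²)) satisfying M p = e − p (eᵀ p). -/
open scoped RealInnerProductSpace

/-!
Write the equation as the fixed-point problem `p = M⁻¹ (e - ⟪e, p⟫ • p)`. With `c ≥ ‖M⁻¹‖`, the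
right-hand side maps the ball of radius `r` into itself as soon as `c ‖e‖ (1 + r²) ≤ r`, and is
`2 c ‖e‖ r`-Lipschitz there. For `c = 1/θ` and `η = ‖e‖` the smallest admissible radius is the
smaller root `r = 2η / (θ + √(θ² - 4η²))` of `η r² - θ r + η = 0`, and `2 η r / θ < 1` because
`2η < θ`, so Banach's fixed point theorem applies.
-/

section InnerSmulSelf

variable {E : Type*} [NormedAddCommGroup E] [InnerProductSpace ℝ E]

lemma norm_inner_smul_self_le (e p : E) : ‖⟪e, p⟫ • p‖ ≤ ‖e‖ * ‖p‖ ^ 2 := by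
  rw [norm_smul, Real.norm_eq_abs, sq, ← mul_assoc]
  gcongr
  exact abs_real_inner_le_norm e p

lemma norm_inner_smul_self_sub_inner_smul_self_le (e p q : E) :
    ‖⟪e, p⟫ • p - ⟪e, q⟫ • q‖ ≤ ‖e‖ * (‖p‖ + ‖q‖) * ‖p - q‖ := by
  have hsplit : ⟪e, p⟫ • p - ⟪e, q⟫ • q = ⟪e, p⟫ • (p - q) + ⟪e, p - q⟫ • q := by
    rw [inner_sub_right]
    module
  calc ‖⟪e, p⟫ • p - ⟪e, q⟫ • q‖
      ≤ |⟪e, p⟫| * ‖p - q‖ + |⟪e, p - q⟫| * ‖q‖ := by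
        rw [hsplit]
        refine (norm_add_le _ _).trans_eq ?_
        rw [norm_smul, norm_smul, Real.norm_eq_abs, Real.norm_eq_abs]
    _ ≤ ‖e‖ * ‖p‖ * ‖p - q‖ + ‖e‖ * ‖p - q‖ * ‖q‖ := by
        gcongr <;> exact abs_real_inner_le_norm _ _
    _ = ‖e‖ * (‖p‖ + ‖q‖) * ‖p - q‖ := by ring

variable (T : E →L[ℝ] E) (e : E) {c r : ℝ}

lemma mapsTo_closedBall_of_opNorm_le (hT : ‖T‖ ≤ c) (hr : c * ‖e‖ * (1 + r ^ 2) ≤ r) :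
    Set.MapsTo (fun p ↦ T (e - ⟪e, p⟫ • p)) (Metric.closedBall 0 r) (Metric.closedBall 0 r) := by
  intro p hp
  rw [mem_closedBall_zero_iff] at hp ⊢
  have hc : 0 ≤ c := (norm_nonneg T).trans hT
  calc ‖T (e - ⟪e, p⟫ • p)‖ ≤ c * (‖e‖ + ‖e‖ * ‖p‖ ^ 2) :=
        (T.le_of_opNorm_le hT _).trans <| by
          gcongr
          exact (norm_sub_le _ _).trans (by gcongr; exact norm_inner_smul_self_le e p)
    _ ≤ c * ‖e‖ * (1 + r ^ 2) := by
        rw [mul_assoc, mul_one_add ‖e‖]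
        gcongr
    _ ≤ r := hr

lemma lipschitzOnWith_closedBall_of_opNorm_le (hT : ‖T‖ ≤ c) (hr : 0 ≤ r) :
    LipschitzOnWith (Real.toNNReal (2 * c * ‖e‖ * r)) (fun p ↦ T (e - ⟪e, p⟫ • p))
      (Metric.closedBall 0 r) := by
  have hc : 0 ≤ c := (norm_nonneg T).trans hT
  refine LipschitzOnWith.of_dist_le_mul fun p hp q hq ↦ ?_
  rw [mem_closedBall_zero_iff] at hp hq
  rw [dist_eq_norm, dist_eq_norm, ← map_sub, Real.coe_toNNReal _ (by positivity)]
  calc ‖T (e - ⟪e, p⟫ • p - (e - ⟪e, q⟫ • q))‖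
      ≤ c * (‖e‖ * (‖q‖ + ‖p‖) * ‖q - p‖) := by
        refine (T.le_of_opNorm_le hT _).trans ?_
        rw [sub_sub_sub_cancel_left]
        gcongr
        exact norm_inner_smul_self_sub_inner_smul_self_le e q p
    _ ≤ c * (‖e‖ * (r + r) * ‖p - q‖) := by
        rw [norm_sub_rev q p]
        gcongr
    _ = 2 * c * ‖e‖ * r * ‖p - q‖ := by ring

end InnerSmulSelf

theorem exists_norm_le_apply_eq_sub_inner_smul_self {E : Type*} [NormedAddCommGroup E]
    [InnerProductSpace ℝ E] [CompleteSpace E] (M : E ≃L[ℝ] E) (e : E) {c r : ℝ}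
    (hM : ‖(M.symm : E →L[ℝ] E)‖ ≤ c) (hr₀ : 0 ≤ r) (hr : c * ‖e‖ * (1 + r ^ 2) ≤ r)
    (hcontr : 2 * c * ‖e‖ * r < 1) :
    ∃ p : E, ‖p‖ ≤ r ∧ M p = e - ⟪e, p⟫ • p := by
  have hmaps := mapsTo_closedBall_of_opNorm_le _ e hM hr
  have hK : Real.toNNReal (2 * c * ‖e‖ * r) < 1 := by simpa using hcontr
  have hf : ContractingWith _ (hmaps.restrict _ _ _) :=
    ⟨hK, (lipschitzOnWith_closedBall_of_opNorm_le _ e hM hr₀).mapsToRestrict hmaps⟩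
  obtain ⟨p, hp, hfix, -⟩ := hf.exists_fixedPoint' Metric.isClosed_closedBall.isComplete hmaps
    (Metric.mem_closedBall_self hr₀) (edist_ne_top _ _)
  have hfix : M.symm (e - ⟪e, p⟫ • p) = p := hfix
  exact ⟨p, mem_closedBall_zero_iff.mp hp, (M.symm_apply_eq.mp hfix).symm⟩

lemma mul_one_add_sq_div_eq {θ η s : ℝ} (hs : s ^ 2 = θ ^ 2 - 4 * η ^ 2) (hθs : θ + s ≠ 0) :
    η * (1 + (2 * η / (θ + s)) ^ 2) = θ * (2 * η / (θ + s)) := by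
  field_simp
  linear_combination η * hs

theorem stmt_18_general {m : ℕ} (θ η : ℝ) (hηθ : 2 * η < θ)
    (M : EuclideanSpace ℝ (Fin m) ≃L[ℝ] EuclideanSpace ℝ (Fin m))
    (hM : ‖(M.symm : EuclideanSpace ℝ (Fin m) →L[ℝ] EuclideanSpace ℝ (Fin m))‖ = 1 / θ)
    (e : EuclideanSpace ℝ (Fin m)) (he : ‖e‖ = η) :
    ∃ p : EuclideanSpace ℝ (Fin m),
      ‖p‖ ≤ 2 * η / (θ + Real.sqrt (θ ^ 2 - 4 * η ^ 2)) ∧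
      M p = e - ⟪e, p⟫ • p := by
  have hη : 0 ≤ η := he ▸ norm_nonneg e
  have hθ : 0 < θ := by linarith
  have hsq : √(θ ^ 2 - 4 * η ^ 2) ^ 2 = θ ^ 2 - 4 * η ^ 2 := Real.sq_sqrt (by nlinarith)
  have hden : 0 < θ + √(θ ^ 2 - 4 * η ^ 2) := by positivity
  have hr_le : 2 * η / (θ + √(θ ^ 2 - 4 * η ^ 2)) ≤ 2 * η / θ :=
    div_le_div_of_nonneg_left (by linarith) hθ (by simp)
  refine exists_norm_le_apply_eq_sub_inner_smul_self M e hM.le (by positivity) ?_ ?_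
  · rw [he, mul_assoc, mul_one_add_sq_div_eq hsq hden.ne', ← mul_assoc, one_div_mul_cancel hθ.ne',
      one_mul]
  · rw [he]
    calc 2 * (1 / θ) * η * (2 * η / (θ + √(θ ^ 2 - 4 * η ^ 2)))
        ≤ 2 * (1 / θ) * η * (2 * η / θ) := by gcongr
      _ = (2 * η / θ) ^ 2 := by ring
      _ < 1 := by
        rw [sq_lt_one_iff₀ (by positivity), div_lt_one hθ]
        linarith

/-- Let `θ > 0`, `η ≥ 0` with `2η < θ`, `M` an invertible linear map on `ℝ^m` with
`‖M⁻¹‖ = 1/θ`, and `e` a vector with `‖e‖ = η`. Then there exists `p` with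
`‖p‖ ≤ 2η/(θ + √(θ² − 4η²))` such that `M p = e − p (eᵀ p)`. -/
theorem stmt_18 {m : ℕ} (θ η : ℝ) (hθ : 0 < θ) (hη : 0 ≤ η) (hηθ : 2 * η < θ)
    (M : EuclideanSpace ℝ (Fin m) ≃L[ℝ] EuclideanSpace ℝ (Fin m))
    (hM : ‖(M.symm : EuclideanSpace ℝ (Fin m) →L[ℝ] EuclideanSpace ℝ (Fin m))‖ = 1 / θ)
    (e : EuclideanSpace ℝ (Fin m)) (he : ‖e‖ = η) :
    ∃ p : EuclideanSpace ℝ (Fin m),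
      ‖p‖ ≤ 2 * η / (θ + Real.sqrt (θ ^ 2 - 4 * η ^ 2)) ∧
      M p = e - ⟪e, p⟫ • p :=
  stmt_18_general θ η hηθ M hM e he
end

section
/- Let G be a connected d-regular graph on n vertices whose additive spectral gap δ = d − λ₂ satisfies δ > (2/c)·sqrt(n) + 2 for some 0 < c < 1. Let e be an edge added to or removed from G (with the result connected). Then the principal ratio satisfies γ(G ± e) < (1+c)/(1−c). -/
/-!
Write `A_H = A_G + ε E` with `E` the adjacency matrix of the edge `ab` and `ε = ±1`; the Perron
eigenvalue of `H` satisfies `μ ≥ d - 2` (Collatz–Wielandt at the smallest coordinate of `q`).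
Let `z = q - β𝟙` be the deviation of `q` from its mean. Since `A_G 𝟙 = d 𝟙` and `z ⊥ 𝟙`,
`z ⬝ (μ - A_G) z = ε z ⬝ E q`, while `z ⬝ A_G z ≤ (d - δ) |z|²` because, `G` being connected,
the eigenvalue `d` only has constant eigenvectors. Hence `(δ - 2) |z|² ≤ |z| |E q| ≤ √2 |z| max q`,
so every coordinate of `q` is within `√2 max q / (δ - 2) < (c / 2) max q` of `β`, which gives
`min q > (1 - c) max q`.
-/

open SimpleGraph Matrix Finset

namespace Matrix

variable {ι : Type*} [Fintype ι]

theorem IsHermitian.dotProduct_mulVec_le_of_forall_eigenvector [DecidableEq ι]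
    {A : Matrix ι ι ℝ} (hA : A.IsHermitian) {t : ℝ} {z : ι → ℝ}
    (h : ∀ (ev : ℝ) (v : ι → ℝ), v ≠ 0 → A *ᵥ v = ev • v → ev ≤ t ∨ v ⬝ᵥ z = 0) :
    z ⬝ᵥ (A *ᵥ z) ≤ t * (z ⬝ᵥ z) := by
  set b := hA.eigenvectorBasis
  have parseval (w : ι → ℝ) : z ⬝ᵥ w = ∑ i, (b i ⬝ᵥ z) * (b i ⬝ᵥ w) := by
    simpa [EuclideanSpace.inner_eq_star_dotProduct, dotProduct_comm] using
      (b.sum_inner_mul_inner (WithLp.toLp 2 z) (WithLp.toLp 2 w)).symm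
  have hAT : Aᵀ = A := by rw [← conjTranspose_eq_transpose_of_trivial]; exact hA
  have hcoeff (i : ι) : b i ⬝ᵥ (A *ᵥ z) = hA.eigenvalues i * (b i ⬝ᵥ z) := by
    rw [dotProduct_mulVec, ← mulVec_transpose, hAT, hA.mulVec_eigenvectorBasis, smul_dotProduct,
      smul_eq_mul]
  rw [parseval, parseval z, Finset.mul_sum]
  refine Finset.sum_le_sum fun i _ => ?_
  have hne : (b i : ι → ℝ) ≠ 0 := by
    rw [Ne, WithLp.ofLp_eq_zero]; exact b.orthonormal.ne_zero i
  rw [hcoeff]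
  rcases h _ _ hne (hA.mulVec_eigenvectorBasis i) with hle | hzero
  · nlinarith [mul_self_nonneg (b i ⬝ᵥ z)]
  · simp [b, hzero]

theorem sq_mul_dotProduct_self_le_of_mul_le {K : ℝ} {z w : ι → ℝ} (hK : 0 ≤ K)
    (h : K * (z ⬝ᵥ z) ≤ z ⬝ᵥ w) : K ^ 2 * (z ⬝ᵥ z) ≤ w ⬝ᵥ w := by
  have hzz : 0 ≤ z ⬝ᵥ z := Finset.sum_nonneg fun i _ => mul_self_nonneg (z i)
  have hww : 0 ≤ w ⬝ᵥ w := Finset.sum_nonneg fun i _ => mul_self_nonneg (w i)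
  rcases hzz.eq_or_lt with h0 | hpos
  · rw [← h0, mul_zero]; exact hww
  have hcs : (z ⬝ᵥ w) ^ 2 ≤ (z ⬝ᵥ z) * (w ⬝ᵥ w) := by
    simpa only [dotProduct, sq] using Finset.sum_mul_sq_le_sq_mul_sq univ z w
  refine le_of_mul_le_mul_left ?_ hpos
  nlinarith [mul_nonneg hK hzz]

theorem sq_mul_dotProduct_self_le_of_add_mulVec_eq_smul {A P : Matrix ι ι ℝ}
    {q z : ι → ℝ} {d t μ β K : ℝ} (hA : ∀ c i, (A *ᵥ Function.const ι c) i = d * c)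
    (heig : (A + P) *ᵥ q = μ • q) (hz : z = q - Function.const ι β) (hzsum : ∑ i, z i = 0)
    (hray : z ⬝ᵥ (A *ᵥ z) ≤ t * (z ⬝ᵥ z)) (hK : 0 ≤ K) (hKμ : K ≤ μ - t) :
    K ^ 2 * (z ⬝ᵥ z) ≤ (P *ᵥ q) ⬝ᵥ (P *ᵥ q) := by
  have hres : μ • z - A *ᵥ z = P *ᵥ q + Function.const ι ((d - μ) * β) := by
    ext i
    have hi := congrFun heig i
    simp only [add_mulVec, Pi.add_apply, Pi.smul_apply, smul_eq_mul] at hi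
    simp only [hz, mulVec_sub, Pi.sub_apply, Pi.smul_apply, smul_eq_mul, hA, Pi.add_apply,
      Function.const_apply]
    linear_combination -hi
  have henergy : z ⬝ᵥ (μ • z - A *ᵥ z) = z ⬝ᵥ (P *ᵥ q) := by
    rw [hres, dotProduct_add, add_eq_left]
    simp [dotProduct, ← Finset.sum_mul, hzsum]
  have hzz : 0 ≤ z ⬝ᵥ z := Finset.sum_nonneg fun i _ => mul_self_nonneg (z i)
  refine sq_mul_dotProduct_self_le_of_mul_le hK ?_
  calc K * (z ⬝ᵥ z) ≤ (μ - t) * (z ⬝ᵥ z) := mul_le_mul_of_nonneg_right hKμ hzz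
    _ ≤ z ⬝ᵥ (μ • z - A *ᵥ z) := by rw [dotProduct_sub, dotProduct_smul, smul_eq_mul]; linarith
    _ = z ⬝ᵥ (P *ᵥ q) := henergy

theorem abs_le_div_of_sq_mul_dotProduct_self_le {K R : ℝ} {z : ι → ℝ} (hK : 0 < K)
    (hR : 0 ≤ R) (h : K ^ 2 * (z ⬝ᵥ z) ≤ R ^ 2) (i : ι) : |z i| ≤ R / K := by
  have hzi : z i ^ 2 ≤ z ⬝ᵥ z := by
    simpa [sq, dotProduct] using
      Finset.single_le_sum (fun j _ => mul_self_nonneg (z j)) (mem_univ i)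
  rw [le_div_iff₀ hK, ← abs_of_pos hK, ← abs_mul]
  refine abs_le_of_sq_le_sq ?_ hR
  nlinarith

theorem le_of_mulVec_eq_smul_of_nonneg [Nonempty ι] {B : Matrix ι ι ℝ}
    (hB : ∀ i j, 0 ≤ B i j) {q : ι → ℝ} (hq : ∀ i, 0 < q i) {μ r : ℝ} (heig : B *ᵥ q = μ • q)
    (hr : ∀ i, r ≤ (B *ᵥ Function.const ι 1) i) : r ≤ μ := by
  obtain ⟨m, hm⟩ := Finite.exists_min q
  refine le_of_mul_le_mul_right ?_ (hq m)
  calc r * q m ≤ (B *ᵥ Function.const ι 1) m * q m := mul_le_mul_of_nonneg_right (hr m) (hq m).le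
    _ = ∑ j, B m j * q m := by simp [mulVec, dotProduct, Finset.sum_mul]
    _ ≤ ∑ j, B m j * q j :=
      Finset.sum_le_sum fun j _ => mul_le_mul_of_nonneg_left (hm j) (hB m j)
    _ = μ * q m := congrFun heig m

variable [DecidableEq ι]

theorem single_add_single_mulVec (a b : ι) (v : ι → ℝ) :
    (single a b 1 + single b a 1) *ᵥ v = Pi.single a (v b) + Pi.single b (v a) := by
  ext i
  simp [add_mulVec, single_mulVec, Pi.single_apply, Function.update_apply]

theorem neg_two_le_smul_single_add_single_mulVec_const {a b : ι} {ε : ℝ} (hε : |ε| ≤ 1)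
    (i : ι) : -2 ≤ ((ε • (single a b (1 : ℝ) + single b a 1)) *ᵥ Function.const ι 1) i := by
  have := neg_abs_le ε
  rw [smul_mulVec, single_add_single_mulVec]
  simp only [Pi.smul_apply, Pi.add_apply, Pi.single_apply, Function.const_apply, smul_eq_mul]
  split_ifs <;> linarith

theorem dotProduct_self_smul_single_add_single_mulVec_le {a b : ι} (hab : a ≠ b) {ε M : ℝ}
    (hε : |ε| ≤ 1) {v : ι → ℝ} (hv : ∀ i, |v i| ≤ M) :
    ((ε • (single a b 1 + single b a 1)) *ᵥ v) ⬝ᵥ ((ε • (single a b 1 + single b a 1)) *ᵥ v)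
      ≤ 2 * M ^ 2 := by
  rw [smul_mulVec, single_add_single_mulVec, smul_dotProduct, dotProduct_smul]
  have hv2 (i : ι) : v i ^ 2 ≤ M ^ 2 := sq_le_sq' (abs_le.1 (hv i)).1 (abs_le.1 (hv i)).2
  have hε2 : ε ^ 2 ≤ 1 := by simpa using sq_le_sq' (abs_le.1 hε).1 (abs_le.1 hε).2
  simp only [dotProduct_add, dotProduct_single, Pi.add_apply, Pi.single_eq_same,
    Pi.single_eq_of_ne hab, Pi.single_eq_of_ne hab.symm, add_zero, zero_add, smul_eq_mul]
  nlinarith [hv2 a, hv2 b, sq_nonneg (v a), sq_nonneg (v b)]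

end Matrix

theorem mul_one_sub_lt_of_forall_abs_sub_le {ι : Type*} {q : ι → ℝ} {β ρ c : ℝ} {m : ι}
    (hc : c ≤ 1) (hm : ∀ i, q i ≤ q m) (hdev : ∀ i, |q i - β| ≤ ρ) (hρ : 2 * ρ < c * q m)
    (i j : ι) : q i * (1 - c) < q j := by
  have hm' := (abs_le.1 (hdev m)).2
  have hj := (abs_le.1 (hdev j)).1
  nlinarith [mul_le_mul_of_nonneg_right (hm i) (sub_nonneg.2 hc)]

theorem div_lt_of_sq_mul_dotProduct_self_le {ι : Type*} [Fintype ι] {q : ι → ℝ}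
    (hq : ∀ i, 0 < q i) {m : ι} (hm : ∀ i, q i ≤ q m) {β K c : ℝ} (hK : 0 < K) (hc0 : 0 < c)
    (hc1 : c < 1) (hKc : 2 * Real.sqrt 2 < c * K)
    (h : K ^ 2 * ((q - Function.const ι β) ⬝ᵥ (q - Function.const ι β)) ≤ 2 * q m ^ 2)
    (i j : ι) : q i / q j < (1 + c) / (1 - c) := by
  have hdev := abs_le_div_of_sq_mul_dotProduct_self_le hK
    (mul_pos (Real.sqrt_pos.2 two_pos) (hq m)).le (by rwa [mul_pow, Real.sq_sqrt zero_le_two])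
  have hρ : 2 * (Real.sqrt 2 * q m / K) < c * q m := by
    rw [← mul_div_assoc, div_lt_iff₀ hK]; nlinarith [hq m]
  have := mul_one_sub_lt_of_forall_abs_sub_le hc1.le hm hdev hρ i j
  rw [div_lt_div_iff₀ (hq j) (by linarith)]
  nlinarith [mul_pos hc0 (hq j)]

namespace SimpleGraph

variable {V : Type*}

theorem adjMatrix_eq_add_of_disjoint {R : Type*} [AddMonoidWithOne R]
    {G F K : SimpleGraph V} [DecidableRel G.Adj] [DecidableRel F.Adj] [DecidableRel K.Adj]
    (hdisj : Disjoint G F) (hsup : G ⊔ F = K) :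
    K.adjMatrix R = G.adjMatrix R + F.adjMatrix R := by
  subst hsup
  ext x y
  by_cases hG : G.Adj x y
  · have hF : ¬ F.Adj x y := fun hF => hdisj.le_bot ⟨hG, hF⟩
    simp [hG, hF]
  · by_cases hF : F.Adj x y <;> simp [hG, hF]

variable [DecidableEq V]

theorem adjMatrix_fromEdgeSet_singleton {R : Type*} [AddMonoidWithOne R] {a b : V} (hab : a ≠ b)
    [DecidableRel (fromEdgeSet {s(a, b)}).Adj] :
    (fromEdgeSet {s(a, b)}).adjMatrix R = single a b 1 + single b a 1 := by
  ext x y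
  simp only [adjMatrix_apply, fromEdgeSet_adj, Set.mem_singleton_iff, Sym2.eq_iff,
    Matrix.add_apply, single_apply]
  split_ifs <;> grind

theorem exists_adjMatrix_eq_add_smul_single_add_single {G H : SimpleGraph V} [DecidableRel G.Adj]
    [DecidableRel H.Adj]
    (hH : (∃ a b : V, a ≠ b ∧ ¬ G.Adj a b ∧ H = G ⊔ fromEdgeSet {s(a, b)}) ∨
      (∃ a b : V, G.Adj a b ∧ H = G.deleteEdges {s(a, b)})) :
    ∃ a b : V, a ≠ b ∧ ∃ ε : ℝ, |ε| = 1 ∧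
      H.adjMatrix ℝ = G.adjMatrix ℝ + ε • (single a b 1 + single b a 1) := by
  classical
  rcases hH with ⟨a, b, hab, hnadj, rfl⟩ | ⟨a, b, hadj, rfl⟩
  · refine ⟨a, b, hab, 1, abs_one, ?_⟩
    have hdisj : Disjoint G (fromEdgeSet {s(a, b)}) := by
      rw [disjoint_iff_inf_le]
      intro x y ⟨hG, hF⟩
      simp only [fromEdgeSet_adj, Set.mem_singleton_iff, Sym2.eq_iff] at hF
      grind [G.adj_symm]
    rw [adjMatrix_eq_add_of_disjoint hdisj rfl, adjMatrix_fromEdgeSet_singleton hab, one_smul]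
  · refine ⟨a, b, G.ne_of_adj hadj, -1, by simp, ?_⟩
    have hsup : G.deleteEdges {s(a, b)} ⊔ fromEdgeSet {s(a, b)} = G := by
      refine sdiff_sup_cancel ?_
      simp [Set.subset_def, hadj]
    have hdisj : Disjoint (G.deleteEdges {s(a, b)}) (fromEdgeSet {s(a, b)}) :=
      disjoint_sdiff_self_left
    rw [adjMatrix_eq_add_of_disjoint (R := ℝ) hdisj hsup,
      adjMatrix_fromEdgeSet_singleton (G.ne_of_adj hadj), neg_one_smul]
    abel

variable [Fintype V]

theorem IsRegularOfDegree.sub_two_le_of_adjMatrix_mulVec_eq_smul {G H : SimpleGraph V}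
    [DecidableRel G.Adj] [DecidableRel H.Adj] {d : ℕ} (hreg : G.IsRegularOfDegree d) {a b : V}
    {ε : ℝ} (hε : |ε| ≤ 1) (hHG : H.adjMatrix ℝ = G.adjMatrix ℝ + ε • (single a b 1 + single b a 1))
    {q : V → ℝ} (hq : ∀ i, 0 < q i) {μ : ℝ} (heig : H.adjMatrix ℝ *ᵥ q = μ • q) :
    (d : ℝ) - 2 ≤ μ := by
  have : Nonempty V := ⟨a⟩
  refine le_of_mulVec_eq_smul_of_nonneg (fun x y => ?_) hq heig fun x => ?_
  · rw [adjMatrix_apply]; split_ifs <;> norm_num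
  · rw [hHG, add_mulVec, Pi.add_apply, adjMatrix_mulVec_const_apply_of_regular hreg]
    linarith [neg_two_le_smul_single_add_single_mulVec_const (a := a) (b := b) hε x]

theorem IsRegularOfDegree.eq_of_adjMatrix_mulVec_eq_smul {G : SimpleGraph V} [DecidableRel G.Adj]
    {d : ℕ} (hreg : G.IsRegularOfDegree d) (hG : G.Connected) {v : V → ℝ}
    (hv : G.adjMatrix ℝ *ᵥ v = (d : ℝ) • v) (i j : V) : v i = v j := by
  have hlap : G.lapMatrix ℝ *ᵥ v = 0 := by
    ext x
    rw [lapMatrix_mulVec_apply, hreg x, ← adjMatrix_mulVec_apply, hv]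
    simp
  exact (lapMatrix_mulVec_eq_zero_iff_forall_reachable G).1 hlap i j (hG i j)

theorem IsRegularOfDegree.dotProduct_adjMatrix_mulVec_le {G : SimpleGraph V} [DecidableRel G.Adj]
    {d : ℕ} (hreg : G.IsRegularOfDegree d) (hG : G.Connected) {t : ℝ}
    (hgap : ∀ (μ : ℝ) (v : V → ℝ), v ≠ 0 → G.adjMatrix ℝ *ᵥ v = μ • v → μ = d ∨ μ ≤ t)
    {z : V → ℝ} (hz : ∑ i, z i = 0) :
    z ⬝ᵥ (G.adjMatrix ℝ *ᵥ z) ≤ t * (z ⬝ᵥ z) := by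
  refine (G.isHermitian_adjMatrix ℝ).dotProduct_mulVec_le_of_forall_eigenvector
    fun ev v hv hev => (hgap ev v hv hev).symm.imp_right fun hd => ?_
  obtain ⟨i₀⟩ := hG.nonempty
  have hconst := hreg.eq_of_adjMatrix_mulVec_eq_smul hG (hd ▸ hev)
  simp only [dotProduct, hconst _ i₀, ← Finset.mul_sum, hz, mul_zero]

end SimpleGraph

theorem stmt_19_general {n d : ℕ} (G : SimpleGraph (Fin n)) [DecidableRel G.Adj]
    (hG : G.Connected) (hreg : G.IsRegularOfDegree d)
    (δ c : ℝ) (hc0 : 0 < c) (hc1 : c < 1)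
    (hgap : ∀ (μ : ℝ) (v : Fin n → ℝ), v ≠ 0 → G.adjMatrix ℝ *ᵥ v = μ • v →
      μ = d ∨ μ ≤ d - δ)
    (hδ : δ > 2 / c * Real.sqrt n + 2)
    (H : SimpleGraph (Fin n)) [DecidableRel H.Adj]
    (hH : (∃ a b : Fin n, a ≠ b ∧ ¬ G.Adj a b ∧
            H = G ⊔ SimpleGraph.fromEdgeSet {s(a, b)}) ∨
          (∃ a b : Fin n, G.Adj a b ∧ H = G.deleteEdges {s(a, b)}))
    (μ : ℝ) (q : Fin n → ℝ) (hpos : ∀ w, 0 < q w)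
    (heig : H.adjMatrix ℝ *ᵥ q = μ • q) :
    ∀ i j : Fin n, q i / q j < (1 + c) / (1 - c) := by
  intro i j
  obtain ⟨a, b, hab, ε, hε, hHG⟩ := exists_adjMatrix_eq_add_smul_single_add_single hH
  have hμ := hreg.sub_two_le_of_adjMatrix_mulVec_eq_smul hε.le hHG hpos heig
  have hn : 2 ≤ n := by have := Fin.val_ne_of_ne hab; omega
  have hKc : 2 * Real.sqrt 2 < c * (δ - 2) :=
    calc 2 * Real.sqrt 2 ≤ 2 * Real.sqrt n := by gcongr; exact_mod_cast hn
      _ = c * (2 / c * Real.sqrt n) := by field_simp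
      _ < c * (δ - 2) := by gcongr; linarith
  have hK : 0 < δ - 2 := by nlinarith [Real.sqrt_nonneg 2]
  have : Nonempty (Fin n) := ⟨a⟩
  obtain ⟨m, hm⟩ := Finite.exists_max q
  set z := q - Function.const (Fin n) ((∑ x, q x) / n) with hz
  have hzsum : ∑ x, z x = 0 := by
    have hn0 : (n : ℝ) ≠ 0 := by positivity
    simp [z, Finset.sum_sub_distrib, mul_div_cancel₀ _ hn0]
  refine div_lt_of_sq_mul_dotProduct_self_le (β := (∑ x, q x) / n) hpos hm hK hc0 hc1 hKc ?_ i j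
  calc (δ - 2) ^ 2 * (z ⬝ᵥ z)
      ≤ ((ε • (single a b 1 + single b a 1)) *ᵥ q) ⬝ᵥ ((ε • (single a b 1 + single b a 1)) *ᵥ q) :=
        sq_mul_dotProduct_self_le_of_add_mulVec_eq_smul
          (fun _ _ => adjMatrix_mulVec_const_apply_of_regular hreg) (hHG ▸ heig) hz hzsum
          (hreg.dotProduct_adjMatrix_mulVec_le hG hgap hzsum) hK.le (by linarith)
    _ ≤ 2 * q m ^ 2 := dotProduct_self_smul_single_add_single_mulVec_le hab hε.le
        fun y => (abs_of_pos (hpos y)).trans_le (hm y)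

/-- Let `G` be a connected `d`-regular graph on `n` vertices whose additive spectral
gap `δ = d − λ₂` satisfies `δ > (2/c)√n + 2` for some `0 < c < 1` (expressed as: every
eigenvalue of `G` is either `d` or at most `d − δ`). Let `H` be obtained from `G` by
adding a non-edge or deleting a (non-bridge) edge, `H` connected. Then the principal
ratio of `H` satisfies `γ(H) < (1+c)/(1−c)`. -/
theorem stmt_19 {n d : ℕ} (G : SimpleGraph (Fin n)) [DecidableRel G.Adj]
    (hG : G.Connected) (hreg : G.IsRegularOfDegree d)
    (δ c : ℝ) (hc0 : 0 < c) (hc1 : c < 1)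
    (hgap : ∀ (μ : ℝ) (v : Fin n → ℝ), v ≠ 0 → G.adjMatrix ℝ *ᵥ v = μ • v →
      μ = d ∨ μ ≤ d - δ)
    (hδ : δ > 2 / c * Real.sqrt n + 2)
    (H : SimpleGraph (Fin n)) [DecidableRel H.Adj]
    (hH : (∃ a b : Fin n, a ≠ b ∧ ¬ G.Adj a b ∧
            H = G ⊔ SimpleGraph.fromEdgeSet {s(a, b)}) ∨
          (∃ a b : Fin n, G.Adj a b ∧ H = G.deleteEdges {s(a, b)}))
    (hHconn : H.Connected)
    (μ : ℝ) (q : Fin n → ℝ) (hpos : ∀ w, 0 < q w)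
    (heig : H.adjMatrix ℝ *ᵥ q = μ • q) :
    ∀ i j : Fin n, q i / q j < (1 + c) / (1 - c) :=
  stmt_19_general G hG hreg δ c hc0 hc1 hgap hδ H hH μ q hpos heig
end
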